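/- arXiv:1406.7078 — 5 statements merged into one kernel-verified Lean document; each statement's English description precedes it below -/
import Mathlib

section
/- Let x ≥ 2 and let q be an integer with 2 ≤ q ≤ x, and assume π(x;q,a) > 0 for every a ∈ (ℤ/qℤ)^*. Let X be the probability distribution on the set of primes p ≤ x given by Pr[X = p] = 1/(φ(q)·π(x;q,p mod q)) if gcd(p,q) = 1, and Pr[X = p] = 0 if p divides q (this is a probability distribution). Then its squared Euclidean imbalance satisfies the exact identity Δ₂²(X) = (1/π(x)²)·Σ_{a∈(ℤ/qℤ)^*} (1/π(x;q,a))·(π(x;q,a) − π(x)/φ(q))² + ω(q)/π(x)². -/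
/-!
Split the primes `p ≤ x` into those dividing `q`, which are exactly the `ω(q)` prime factors of
`q` (as `q ≤ x`) and each contribute `(0 - 1/π(x))²`, and those coprime to `q`, grouped by their
class `a` mod `q`. On the class of `a` the distribution is constant, equal to
`1/(φ(q)·π(x;q,a))`, so the class contributes `π(x;q,a)·(1/(φ(q)·π(x;q,a)) - 1/π(x))²`, which is
the `a`-th summand of the right-hand side after clearing denominators.
-/

/-- The finite set of primes `p ≤ x`. -/
def primesUpTo (x : ℕ) : Finset ℕ := (Finset.range (x + 1)).filter Nat.Prime

/-- `π(x)`, the number of primes `≤ x`. -/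
def primePi (x : ℕ) : ℕ := (primesUpTo x).card

/-- `π(x;q,a)`, the number of primes `p ≤ x` with `p ≡ a (mod q)`. -/
def primePiMod (x q a : ℕ) : ℕ :=
  ((primesUpTo x).filter (fun p => p % q = a % q)).card

/-- Canonical representatives of the invertible classes `(ℤ/qℤ)^*`. -/
def residues (q : ℕ) : Finset ℕ := (Finset.range q).filter (fun a => Nat.Coprime a q)

/-- `φ*ₓ(q) = #{a ∈ (ℤ/qℤ)^* : π(x;q,a) ≠ 0}`. -/
def phiStar (x q : ℕ) : ℕ := ((residues q).filter (fun a => primePiMod x q a ≠ 0)).card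

open Finset

lemma mod_mem_residues {p q : ℕ} (hq : q ≠ 0) (hpq : p.Coprime q) : p % q ∈ residues q :=
  mem_filter.2 ⟨mem_range.2 (Nat.mod_lt p (Nat.pos_of_ne_zero hq)),
    (ZMod.coprime_mod_iff_coprime p q).2 hpq⟩

lemma filter_not_coprime_primesUpTo {x q : ℕ} (hq : q ≠ 0) (hqx : q ≤ x) :
    {p ∈ primesUpTo x | ¬ p.Coprime q} = q.primeFactors := by
  ext p
  simp only [primesUpTo, mem_filter, mem_range, Nat.mem_primeFactors]
  constructor
  · rintro ⟨⟨-, hp⟩, hpq⟩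
    exact ⟨hp, not_not.1 (hp.coprime_iff_not_dvd.not.1 hpq), hq⟩
  · rintro ⟨hp, hpq, -⟩
    have := Nat.le_of_dvd (Nat.pos_of_ne_zero hq) hpq
    exact ⟨⟨by omega, hp⟩, hp.coprime_iff_not_dvd.not.2 (not_not.2 hpq)⟩

lemma filter_mod_eq_filter_coprime_primesUpTo {x q a : ℕ} (ha : a ∈ residues q) :
    {p ∈ {p ∈ primesUpTo x | p.Coprime q} | p % q = a} = {p ∈ primesUpTo x | p % q = a % q} := by
  obtain ⟨haq, hacop⟩ := mem_filter.1 ha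
  rw [Nat.mod_eq_of_lt (mem_range.1 haq), filter_filter]
  refine filter_congr fun p _ => and_iff_right_of_imp fun hpa => ?_
  rw [← ZMod.coprime_mod_iff_coprime, hpa]
  exact hacop

lemma primePiMod_le_primePi (x q a : ℕ) : primePiMod x q a ≤ primePi x :=
  card_filter_le _ _

lemma mul_one_div_mul_sub_one_div_sq {n N φ : ℝ} (hn : n ≠ 0) (hN : N ≠ 0) (hφ : φ ≠ 0) :
    n * (1 / (φ * n) - 1 / N) ^ 2 = 1 / N ^ 2 * (1 / n * (n - N / φ) ^ 2) := by
  field_simp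
  ring

theorem sq_imbalance_eq_general (x q : ℕ) (hq : 2 ≤ q) (hqx : q ≤ x)
    (hpos : ∀ a ∈ residues q, 0 < primePiMod x q a)
    (X : ℕ → ℝ)
    (hX : ∀ p ∈ primesUpTo x,
      X p = if Nat.Coprime p q
        then 1 / ((q.totient : ℝ) * (primePiMod x q (p % q) : ℝ)) else 0) :
    ∑ p ∈ primesUpTo x, (X p - 1 / (primePi x : ℝ)) ^ 2
      = (1 / (primePi x : ℝ) ^ 2) *
          ∑ a ∈ residues q, (1 / (primePiMod x q a : ℝ)) *
            ((primePiMod x q a : ℝ) - (primePi x : ℝ) / (q.totient : ℝ)) ^ 2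
        + (q.primeFactors.card : ℝ) / (primePi x : ℝ) ^ 2 := by
  have hq0 : q ≠ 0 := by omega
  rw [← sum_filter_add_sum_filter_not (primesUpTo x) (Nat.Coprime · q),
    ← sum_fiberwise_of_maps_to fun p hp => mod_mem_residues hq0 (mem_filter.1 hp).2, mul_sum]
  congr 1
  · refine sum_congr rfl fun a ha => ?_
    have hclass : ∀ p ∈ {p ∈ {p ∈ primesUpTo x | p.Coprime q} | p % q = a},
        (X p - 1 / (primePi x : ℝ)) ^ 2
          = (1 / ((q.totient : ℝ) * primePiMod x q a) - 1 / (primePi x : ℝ)) ^ 2 := by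
      intro p hp
      simp only [mem_filter] at hp
      obtain ⟨⟨hpx, hpq⟩, rfl⟩ := hp
      rw [hX p hpx, if_pos hpq]
    have hna := hpos a ha
    have hN := hna.trans_le (primePiMod_le_primePi x q a)
    rw [sum_congr rfl hclass, sum_const, filter_mod_eq_filter_coprime_primesUpTo ha, nsmul_eq_mul]
    exact mul_one_div_mul_sub_one_div_sq (by positivity) (by positivity)
      (by exact_mod_cast (Nat.totient_pos.2 (Nat.pos_of_ne_zero hq0)).ne')
  · have hdiv : ∀ p ∈ {p ∈ primesUpTo x | ¬ p.Coprime q},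
        (X p - 1 / (primePi x : ℝ)) ^ 2 = 1 / (primePi x : ℝ) ^ 2 := by
      intro p hp
      obtain ⟨hpx, hpq⟩ := mem_filter.1 hp
      rw [hX p hpx, if_neg hpq]
      ring
    rw [sum_congr rfl hdiv, sum_const, filter_not_coprime_primesUpTo hq0 hqx, nsmul_eq_mul]
    ring

/-- Let `x ≥ 2`, `2 ≤ q ≤ x`, and assume `π(x;q,a) > 0` for every
`a ∈ (ℤ/qℤ)^*`. Let `X` be the distribution on primes `p ≤ x` with
`Pr[X = p] = 1/(φ(q)·π(x;q,p mod q))` if `gcd(p,q) = 1` and `Pr[X = p] = 0` if `p ∣ q`.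
Then `Δ₂²(X) = (1/π(x)²)·∑_{a∈(ℤ/qℤ)^*} (1/π(x;q,a))·(π(x;q,a) − π(x)/φ(q))² + ω(q)/π(x)²`. -/
theorem sq_imbalance_eq (x q : ℕ) (hx : 2 ≤ x) (hq : 2 ≤ q) (hqx : q ≤ x)
    (hpos : ∀ a ∈ residues q, 0 < primePiMod x q a)
    (X : ℕ → ℝ)
    (hX : ∀ p ∈ primesUpTo x,
      X p = if Nat.Coprime p q
        then 1 / ((q.totient : ℝ) * (primePiMod x q (p % q) : ℝ)) else 0) :
    ∑ p ∈ primesUpTo x, (X p - 1 / (primePi x : ℝ)) ^ 2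
      = (1 / (primePi x : ℝ) ^ 2) *
          ∑ a ∈ residues q, (1 / (primePiMod x q a : ℝ)) *
            ((primePiMod x q a : ℝ) - (primePi x : ℝ) / (q.totient : ℝ)) ^ 2
        + (q.primeFactors.card : ℝ) / (primePi x : ℝ) ^ 2 :=
  sq_imbalance_eq_general x q hq hqx hpos X hX
end

section
/- Let x ≥ 2, let q be an integer with 2 ≤ q ≤ x, assume φ*ₓ(q) > 0 and π(x) > 0, and let X be the probability distribution on the primes p ≤ x given by Pr[X = p] = 1/(φ*ₓ(q)·π(x;q,p mod q)) when gcd(p,q) = 1 (and Pr[X = p] = 0 when p | q). Then the statistical distance to uniform satisfies the exact identity Δ₁(X) = (1/π(x))·Σ_{a∈(ℤ/qℤ)^*, π(x;q,a)≠0} |π(x;q,a) − π(x)/φ*ₓ(q)| + ω(q)/π(x). -/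
open Finset

lemma mul_abs_one_div_mul_sub_one_div {n f π : ℝ} (hn : 0 < n) (hπ : 0 < π) :
    n * |1 / (f * n) - 1 / π| = 1 / π * |n - π / f| := by
  have key : n * (1 / (f * n) - 1 / π) = 1 / π * (π / f - n) := by field_simp
  calc n * |1 / (f * n) - 1 / π| = |n * (1 / (f * n) - 1 / π)| := by
        rw [abs_mul, abs_of_pos hn]
    _ = 1 / π * |n - π / f| := by
        rw [key, abs_mul, abs_of_pos (one_div_pos.2 hπ), abs_sub_comm]

lemma mem_primesUpTo {x p : ℕ} : p ∈ primesUpTo x ↔ p ≤ x ∧ p.Prime := by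
  simp only [primesUpTo, mem_filter, mem_range, Nat.lt_succ_iff]

lemma primePiMod_mod_ne_zero {x q p : ℕ} (hp : p ∈ primesUpTo x) :
    primePiMod x q (p % q) ≠ 0 :=
  card_ne_zero_of_mem (mem_filter.2 ⟨hp, (Nat.mod_mod p q).symm⟩)

lemma primesUpTo_filter_not_coprime {x q : ℕ} (hq : q ≠ 0) (hqx : q ≤ x) :
    (primesUpTo x).filter (fun p => ¬ p.Coprime q) = q.primeFactors := by
  ext p
  simp only [mem_filter, mem_primesUpTo, Nat.mem_primeFactors]
  constructor
  · rintro ⟨⟨-, hp⟩, hpq⟩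
    exact ⟨hp, (Nat.Prime.dvd_iff_not_coprime hp).2 hpq, hq⟩
  · rintro ⟨hp, hpq, -⟩
    exact ⟨⟨(Nat.le_of_dvd (Nat.pos_of_ne_zero hq) hpq).trans hqx, hp⟩,
      (Nat.Prime.dvd_iff_not_coprime hp).1 hpq⟩

lemma card_filter_coprime_filter_mod {x q a : ℕ} (ha : a ∈ residues q) :
    (((primesUpTo x).filter (·.Coprime q)).filter (· % q = a)).card = primePiMod x q a := by
  obtain ⟨haq, hcop⟩ : a < q ∧ a.Coprime q := by simpa [residues] using ha
  rw [primePiMod, filter_filter, Nat.mod_eq_of_lt haq]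
  congr 1
  refine filter_congr fun p _ => and_iff_right_of_imp fun hpa => ?_
  rw [← ZMod.coprime_mod_iff_coprime, hpa]
  exact hcop

section

variable {x q : ℕ} {X : ℕ → ℝ}

lemma sum_abs_sub_filter_not_coprime (hq : q ≠ 0) (hqx : q ≤ x)
    (hX : ∀ p ∈ primesUpTo x, ¬ p.Coprime q → X p = 0) :
    ∑ p ∈ (primesUpTo x).filter (fun p => ¬ p.Coprime q), |X p - 1 / (primePi x : ℝ)|
      = (q.primeFactors.card : ℝ) / (primePi x : ℝ) := by
  have hterm : ∀ p ∈ (primesUpTo x).filter (fun p => ¬ p.Coprime q),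
      |X p - 1 / (primePi x : ℝ)| = 1 / (primePi x : ℝ) := fun p hp => by
    obtain ⟨hpx, hpq⟩ := mem_filter.1 hp
    rw [hX p hpx hpq, zero_sub, abs_neg, abs_of_nonneg (by positivity)]
  rw [sum_congr rfl hterm, sum_const, primesUpTo_filter_not_coprime hq hqx, nsmul_eq_mul,
    mul_one_div]

lemma sum_abs_sub_filter_coprime (hq : q ≠ 0) (c : ℝ)
    (hX : ∀ p ∈ primesUpTo x, p.Coprime q → X p = 1 / (c * primePiMod x q (p % q))) :
    ∑ p ∈ (primesUpTo x).filter (·.Coprime q), |X p - 1 / (primePi x : ℝ)|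
      = 1 / (primePi x : ℝ) * ∑ a ∈ (residues q).filter (fun a => primePiMod x q a ≠ 0),
          |(primePiMod x q a : ℝ) - primePi x / c| := by
  set S := (residues q).filter (fun a => primePiMod x q a ≠ 0)
  set F : ℕ → ℝ := fun a => |1 / (c * primePiMod x q a) - 1 / (primePi x : ℝ)|
  have hmaps : ∀ p ∈ (primesUpTo x).filter (·.Coprime q), p % q ∈ S := fun p hp => by
    obtain ⟨hpx, hpq⟩ := mem_filter.1 hp
    simp only [S, residues, mem_filter, mem_range, ZMod.coprime_mod_iff_coprime]
    exact ⟨⟨Nat.mod_lt p (Nat.pos_of_ne_zero hq), hpq⟩, primePiMod_mod_ne_zero hpx⟩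
  calc ∑ p ∈ (primesUpTo x).filter (·.Coprime q), |X p - 1 / (primePi x : ℝ)|
      = ∑ p ∈ (primesUpTo x).filter (·.Coprime q), F (p % q) :=
        sum_congr rfl fun p hp => by rw [hX p (mem_filter.1 hp).1 (mem_filter.1 hp).2]
    _ = ∑ a ∈ S, (primePiMod x q a : ℝ) * F a := by
        rw [← sum_fiberwise_of_maps_to' hmaps F]
        refine sum_congr rfl fun a ha => ?_
        rw [sum_const, card_filter_coprime_filter_mod (mem_filter.1 ha).1, nsmul_eq_mul]
    _ = _ := by
        rw [mul_sum]
        refine sum_congr rfl fun a ha => ?_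
        have hpos : 0 < primePiMod x q a := Nat.pos_of_ne_zero (mem_filter.1 ha).2
        exact mul_abs_one_div_mul_sub_one_div (by exact_mod_cast hpos)
          (by exact_mod_cast hpos.trans_le (primePiMod_le_primePi x q a))

end

theorem statDist_eq_phiStar_general (x q : ℕ) (hq : 2 ≤ q) (hqx : q ≤ x)
    (X : ℕ → ℝ)
    (hX : ∀ p ∈ primesUpTo x,
      X p = if Nat.Coprime p q
        then 1 / ((phiStar x q : ℝ) * (primePiMod x q (p % q) : ℝ)) else 0) :
    ∑ p ∈ primesUpTo x, |X p - 1 / (primePi x : ℝ)|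
      = (1 / (primePi x : ℝ)) *
          ∑ a ∈ (residues q).filter (fun a => primePiMod x q a ≠ 0),
            |(primePiMod x q a : ℝ) - (primePi x : ℝ) / (phiStar x q : ℝ)|
        + (q.primeFactors.card : ℝ) / (primePi x : ℝ) := by
  have hq0 : q ≠ 0 := by omega
  rw [← sum_filter_add_sum_filter_not (primesUpTo x) (·.Coprime q)]
  congr 1
  · exact sum_abs_sub_filter_coprime hq0 _ fun p hp hpq => by rw [hX p hp, if_pos hpq]
  · exact sum_abs_sub_filter_not_coprime hq0 hqx fun p hp hpq => by rw [hX p hp, if_neg hpq]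

/-- Let `x ≥ 2`, `2 ≤ q ≤ x`, `φ*ₓ(q) > 0`, `π(x) > 0`, and let `X` be
the distribution on primes `p ≤ x` with `Pr[X = p] = 1/(φ*ₓ(q)·π(x;q,p mod q))` when
`gcd(p,q) = 1` and `Pr[X = p] = 0` when `p ∣ q`. Then
`Δ₁(X) = (1/π(x))·∑_{a∈(ℤ/qℤ)^*, π(x;q,a)≠0} |π(x;q,a) − π(x)/φ*ₓ(q)| + ω(q)/π(x)`. -/
theorem statDist_eq_phiStar (x q : ℕ) (hx : 2 ≤ x) (hq : 2 ≤ q) (hqx : q ≤ x)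
    (hφ : 0 < phiStar x q) (hπ : 0 < primePi x)
    (X : ℕ → ℝ)
    (hX : ∀ p ∈ primesUpTo x,
      X p = if Nat.Coprime p q
        then 1 / ((phiStar x q : ℝ) * (primePiMod x q (p % q) : ℝ)) else 0) :
    ∑ p ∈ primesUpTo x, |X p - 1 / (primePi x : ℝ)|
      = (1 / (primePi x : ℝ)) *
          ∑ a ∈ (residues q).filter (fun a => primePiMod x q a ≠ 0),
            |(primePiMod x q a : ℝ) - (primePi x : ℝ) / (phiStar x q : ℝ)|
        + (q.primeFactors.card : ℝ) / (primePi x : ℝ) :=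
  statDist_eq_phiStar_general x q hq hqx X hX
end

section
/- Let x ≥ 2, let q be an integer with 2 ≤ q ≤ x, assume φ*ₓ(q) > 0 and π(x) > 0, and let X be the probability distribution on the primes p ≤ x given by Pr[X = p] = 1/(φ*ₓ(q)·π(x;q,p mod q)) when gcd(p,q) = 1 (and Pr[X = p] = 0 when p | q). Set S = √(Σ_{a∈(ℤ/qℤ)^*, π(x;q,a)≠0} (π(x;q,a) − π(x)/φ*ₓ(q))²). Then Δ₁(X) ≤ (S·√(φ*ₓ(q)) + ω(q))/π(x). -/
open Finset

/-- Choose uniformly one of the `φ*ₓ(q)` classes of `(ℤ/qℤ)^*` that contain a prime `p ≤ x`, then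
a prime of that class uniformly. -/
noncomputable def classUniformPrimeDist (x q p : ℕ) : ℝ :=
  if p.Coprime q then 1 / ((phiStar x q : ℝ) * (primePiMod x q (p % q) : ℝ)) else 0

def occupiedResidues (x q : ℕ) : Finset ℕ := (residues q).filter (fun a => primePiMod x q a ≠ 0)

lemma Real.sum_abs_le_sqrt_sum_sq_mul_sqrt_card {ι : Type*} (s : Finset ι) (f : ι → ℝ) :
    ∑ i ∈ s, |f i| ≤ √(∑ i ∈ s, f i ^ 2) * √(#s : ℝ) := by
  simpa [sq_abs] using Real.sum_mul_le_sqrt_mul_sqrt s (fun i => |f i|) (fun _ => 1)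

lemma mul_abs_one_div_mul_sub_one_div_s11 {k N : ℝ} (c : ℝ) (hk : 0 < k) (hN : 0 < N) :
    k * |1 / (c * k) - 1 / N| = |k - N / c| / N := by
  have key : k * (1 / (c * k) - 1 / N) = -((k - N / c) / N) := by
    field_simp
    ring
  have := congrArg abs key
  rwa [abs_mul, abs_of_pos hk, abs_neg, abs_div, abs_of_pos hN] at this

lemma card_filter_not_coprime_le_card_primeFactors {s : Finset ℕ} {q : ℕ}
    (hs : ∀ p ∈ s, p.Prime) (hq : q ≠ 0) :
    #(s.filter (fun p => ¬ p.Coprime q)) ≤ #q.primeFactors := by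
  refine card_le_card fun p hp => ?_
  obtain ⟨hps, hpq⟩ := mem_filter.mp hp
  exact Nat.mem_primeFactors.mpr ⟨hs p hps, (hs p hps).dvd_iff_not_coprime.mpr hpq, hq⟩

lemma prime_of_mem_primesUpTo {x p : ℕ} (hp : p ∈ primesUpTo x) : p.Prime :=
  (mem_filter.mp hp).2

lemma mod_mem_occupiedResidues {x q p : ℕ} (hq : 0 < q) (hp : p ∈ primesUpTo x)
    (hpq : p.Coprime q) : p % q ∈ occupiedResidues x q := by
  refine mem_filter.mpr ⟨mem_filter.mpr ⟨mem_range.mpr (Nat.mod_lt p hq), ?_⟩, ?_⟩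
  · exact (ZMod.coprime_mod_iff_coprime p q).mpr hpq
  · exact card_ne_zero_of_mem (mem_filter.mpr ⟨hp, (Nat.mod_mod p q).symm⟩)

lemma filter_mod_eq_filter_coprime {x q a : ℕ} (ha : a ∈ residues q) :
    ((primesUpTo x).filter (fun p => p.Coprime q)).filter (fun p => p % q = a)
      = (primesUpTo x).filter (fun p => p % q = a % q) := by
  obtain ⟨haq, hacop⟩ := mem_filter.mp ha
  rw [Nat.mod_eq_of_lt (mem_range.mp haq), filter_filter]
  refine filter_congr fun p _ => ⟨And.right, fun hpa => ⟨?_, hpa⟩⟩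
  exact (ZMod.coprime_mod_iff_coprime p q).mp (hpa ▸ hacop)

lemma sum_abs_classUniformPrimeDist_sub_filter_coprime {x q : ℕ} (hq : 0 < q)
    (hπ : 0 < primePi x) :
    ∑ p ∈ (primesUpTo x).filter (fun p => p.Coprime q),
        |classUniformPrimeDist x q p - 1 / (primePi x : ℝ)|
      = (∑ a ∈ occupiedResidues x q,
          |(primePiMod x q a : ℝ) - (primePi x : ℝ) / (phiStar x q : ℝ)|) / (primePi x : ℝ) := by
  rw [← sum_fiberwise_of_maps_to fun p hp =>
    mod_mem_occupiedResidues hq (mem_filter.mp hp).1 (mem_filter.mp hp).2, sum_div]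
  refine sum_congr rfl fun a ha => ?_
  obtain ⟨hares, hane⟩ := mem_filter.mp ha
  have hterm : ∀ p ∈ ((primesUpTo x).filter (fun p => p.Coprime q)).filter (fun p => p % q = a),
      |classUniformPrimeDist x q p - 1 / (primePi x : ℝ)|
        = |1 / ((phiStar x q : ℝ) * primePiMod x q a) - 1 / (primePi x : ℝ)| := by
    intro p hp
    obtain ⟨hpc, hpa⟩ := mem_filter.mp hp
    rw [classUniformPrimeDist, if_pos (mem_filter.mp hpc).2, hpa]
  rw [sum_congr rfl hterm, sum_const, filter_mod_eq_filter_coprime hares, nsmul_eq_mul]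
  exact mul_abs_one_div_mul_sub_one_div_s11 _ (by exact_mod_cast Nat.pos_of_ne_zero hane)
    (by exact_mod_cast hπ)

lemma sum_abs_classUniformPrimeDist_sub_filter_not_coprime_le {x q : ℕ} (hq : q ≠ 0) :
    ∑ p ∈ (primesUpTo x).filter (fun p => ¬ p.Coprime q),
        |classUniformPrimeDist x q p - 1 / (primePi x : ℝ)|
      ≤ (#q.primeFactors : ℝ) / (primePi x : ℝ) := by
  have hterm : ∀ p ∈ (primesUpTo x).filter (fun p => ¬ p.Coprime q),
      |classUniformPrimeDist x q p - 1 / (primePi x : ℝ)| = 1 / (primePi x : ℝ) := by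
    intro p hp
    rw [classUniformPrimeDist, if_neg (mem_filter.mp hp).2, zero_sub, abs_neg,
      abs_of_nonneg (by positivity)]
  rw [sum_congr rfl hterm, sum_const, nsmul_eq_mul, ← div_eq_mul_one_div]
  exact div_le_div_of_nonneg_right (mod_cast card_filter_not_coprime_le_card_primeFactors
    (fun _ => prime_of_mem_primesUpTo) hq) (by positivity)

theorem statDist_le_phiStar_general (x q : ℕ) (hq : 2 ≤ q)
    (hπ : 0 < primePi x)
    (X : ℕ → ℝ)
    (hX : ∀ p ∈ primesUpTo x,
      X p = if Nat.Coprime p q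
        then 1 / ((phiStar x q : ℝ) * (primePiMod x q (p % q) : ℝ)) else 0) :
    ∑ p ∈ primesUpTo x, |X p - 1 / (primePi x : ℝ)|
      ≤ (Real.sqrt (∑ a ∈ (residues q).filter (fun a => primePiMod x q a ≠ 0),
            ((primePiMod x q a : ℝ) - (primePi x : ℝ) / (phiStar x q : ℝ)) ^ 2)
          * Real.sqrt (phiStar x q) + (q.primeFactors.card : ℝ)) / (primePi x : ℝ) := by
  have hXeq : ∀ p ∈ primesUpTo x, |X p - 1 / (primePi x : ℝ)|
      = |classUniformPrimeDist x q p - 1 / (primePi x : ℝ)| := fun p hp => by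
    rw [hX p hp, classUniformPrimeDist]
  rw [sum_congr rfl hXeq, ← sum_filter_add_sum_filter_not _ (fun p => p.Coprime q),
    sum_abs_classUniformPrimeDist_sub_filter_coprime (by omega) hπ, add_div]
  gcongr
  · exact Real.sum_abs_le_sqrt_sum_sq_mul_sqrt_card (occupiedResidues x q) _
  · exact sum_abs_classUniformPrimeDist_sub_filter_not_coprime_le (by omega)

/-- Let `x ≥ 2`, `2 ≤ q ≤ x`, `φ*ₓ(q) > 0`, `π(x) > 0`, and let `X` be
the distribution on primes `p ≤ x` with `Pr[X = p] = 1/(φ*ₓ(q)·π(x;q,p mod q))` when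
`gcd(p,q) = 1` and `Pr[X = p] = 0` when `p ∣ q`. With
`S = √(∑_{a∈(ℤ/qℤ)^*, π(x;q,a)≠0} (π(x;q,a) − π(x)/φ*ₓ(q))²)`, one has
`Δ₁(X) ≤ (S·√(φ*ₓ(q)) + ω(q))/π(x)`. -/
theorem statDist_le_phiStar (x q : ℕ) (hx : 2 ≤ x) (hq : 2 ≤ q) (hqx : q ≤ x)
    (hφ : 0 < phiStar x q) (hπ : 0 < primePi x)
    (X : ℕ → ℝ)
    (hX : ∀ p ∈ primesUpTo x,
      X p = if Nat.Coprime p q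
        then 1 / ((phiStar x q : ℝ) * (primePiMod x q (p % q) : ℝ)) else 0) :
    ∑ p ∈ primesUpTo x, |X p - 1 / (primePi x : ℝ)|
      ≤ (Real.sqrt (∑ a ∈ (residues q).filter (fun a => primePiMod x q a ≠ 0),
            ((primePiMod x q a : ℝ) - (primePi x : ℝ) / (phiStar x q : ℝ)) ^ 2)
          * Real.sqrt (phiStar x q) + (q.primeFactors.card : ℝ)) / (primePi x : ℝ) :=
  statDist_le_phiStar_general x q hq hπ X hX
end

section
/- Let x ≥ 2 and let q ≥ 2 be an integer with φ*ₓ(q) > 0. Set S = √(Σ_{a∈(ℤ/qℤ)^*, π(x;q,a)≠0} (π(x;q,a) − π(x)/φ*ₓ(q))²). Then S ≤ √(Σ_{a∈(ℤ/qℤ)^*} (π(x;q,a) − π(x)/φ(q))²) + π(x)·(φ(q) − φ*ₓ(q))/(φ(q)·√(φ*ₓ(q))). -/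
/-!
Write `π(x;q,a) − π(x)/φ*ₓ(q)` as `(π(x;q,a) − π(x)/φ(q)) + (π(x)/φ(q) − π(x)/φ*ₓ(q))` and apply
Minkowski's inequality on the `φ*ₓ(q)` classes that contain a prime. The first part is bounded by
the full sum over `(ℤ/qℤ)^*`; the second is a constant, contributing
`√(φ*ₓ(q)) · (π(x)/φ*ₓ(q) − π(x)/φ(q)) = π(x)(φ(q) − φ*ₓ(q))/(φ(q)√(φ*ₓ(q)))`.
-/

open Finset

theorem Real.sqrt_sum_add_sq_le {ι : Type*} (s : Finset ι) (f g : ι → ℝ) :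
    √(∑ i ∈ s, (f i + g i) ^ 2) ≤ √(∑ i ∈ s, f i ^ 2) + √(∑ i ∈ s, g i ^ 2) := by
  have h := norm_add_le (WithLp.toLp 2 (fun i : s => f i) : EuclideanSpace ℝ s)
    (WithLp.toLp 2 (fun i : s => g i))
  simpa only [EuclideanSpace.norm_eq, WithLp.ofLp_add, Pi.add_apply, Real.norm_eq_abs, sq_abs,
    sum_coe_sort s (fun i => (f i + g i) ^ 2), sum_coe_sort s (fun i => f i ^ 2),
    sum_coe_sort s (fun i => g i ^ 2)] using h

theorem Real.sqrt_sum_sub_sq_le_of_subset {ι : Type*} {A B : Finset ι} (hAB : A ⊆ B)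
    (f : ι → ℝ) (c d : ℝ) :
    √(∑ i ∈ A, (f i - c) ^ 2) ≤ √(∑ i ∈ B, (f i - d) ^ 2) + √(#A : ℝ) * |d - c| := by
  calc √(∑ i ∈ A, (f i - c) ^ 2)
      = √(∑ i ∈ A, ((f i - d) + (d - c)) ^ 2) := by simp only [sub_add_sub_cancel]
    _ ≤ √(∑ i ∈ A, (f i - d) ^ 2) + √(∑ _i ∈ A, (d - c) ^ 2) :=
      Real.sqrt_sum_add_sq_le A (fun i => f i - d) fun _ => d - c
    _ ≤ √(∑ i ∈ B, (f i - d) ^ 2) + √(#A : ℝ) * |d - c| := by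
      gcongr ?_ + ?_
      · exact Real.sqrt_le_sqrt <|
          sum_le_sum_of_subset_of_nonneg hAB fun i _ _ => sq_nonneg (f i - d)
      · rw [sum_const, nsmul_eq_mul, Real.sqrt_mul (Nat.cast_nonneg _), Real.sqrt_sq_eq_abs]

theorem card_residues (q : ℕ) : #(residues q) = q.totient := by
  rw [Nat.totient, residues]
  exact congrArg card (filter_congr fun a _ => Nat.coprime_comm)

theorem phiStar_le_totient (x q : ℕ) : phiStar x q ≤ q.totient :=
  card_residues q ▸ card_filter_le _ _

theorem sqrt_variance_phiStar_le_general (x q : ℕ)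
    (hφ : 0 < phiStar x q) :
    Real.sqrt (∑ a ∈ (residues q).filter (fun a => primePiMod x q a ≠ 0),
        ((primePiMod x q a : ℝ) - (primePi x : ℝ) / (phiStar x q : ℝ)) ^ 2)
      ≤ Real.sqrt (∑ a ∈ residues q,
            ((primePiMod x q a : ℝ) - (primePi x : ℝ) / (q.totient : ℝ)) ^ 2)
        + (primePi x : ℝ) * ((q.totient : ℝ) - (phiStar x q : ℝ))
            / ((q.totient : ℝ) * Real.sqrt (phiStar x q)) := by
  set P : ℝ := (primePi x : ℝ)
  set φ : ℝ := (q.totient : ℝ)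
  set s : ℝ := (phiStar x q : ℝ)
  have hs : 0 < s := Nat.cast_pos.mpr hφ
  have hsφ : s ≤ φ := Nat.cast_le.mpr (phiStar_le_totient x q)
  have hφ0 : 0 < φ := hs.trans_le hsφ
  have hdiff : P / φ - P / s ≤ 0 :=
    sub_nonpos.mpr (div_le_div_of_nonneg_left (Nat.cast_nonneg _) hs hsφ)
  refine (Real.sqrt_sum_sub_sq_le_of_subset (filter_subset _ _) _ (P / s) (P / φ)).trans_eq ?_
  have hcard : (#((residues q).filter (primePiMod x q · ≠ 0)) : ℝ) = s := rfl
  rw [abs_of_nonpos hdiff, hcard]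
  congr 1
  field_simp
  have hsqrt : √s * √s = s := Real.mul_self_sqrt hs.le
  linear_combination (P * φ - P * s) * hsqrt

/-- Let `x ≥ 2`, `q ≥ 2` with `φ*ₓ(q) > 0`, and set
`S = √(∑_{a∈(ℤ/qℤ)^*, π(x;q,a)≠0} (π(x;q,a) − π(x)/φ*ₓ(q))²)`. Then
`S ≤ √(∑_{a∈(ℤ/qℤ)^*} (π(x;q,a) − π(x)/φ(q))²)
  + π(x)·(φ(q) − φ*ₓ(q))/(φ(q)·√(φ*ₓ(q)))`. -/
theorem sqrt_variance_phiStar_le (x q : ℕ) (hx : 2 ≤ x) (hq : 2 ≤ q)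
    (hφ : 0 < phiStar x q) :
    Real.sqrt (∑ a ∈ (residues q).filter (fun a => primePiMod x q a ≠ 0),
        ((primePiMod x q a : ℝ) - (primePi x : ℝ) / (phiStar x q : ℝ)) ^ 2)
      ≤ Real.sqrt (∑ a ∈ residues q,
            ((primePiMod x q a : ℝ) - (primePi x : ℝ) / (q.totient : ℝ)) ^ 2)
        + (primePi x : ℝ) * ((q.totient : ℝ) - (phiStar x q : ℝ))
            / ((q.totient : ℝ) * Real.sqrt (phiStar x q)) :=
  sqrt_variance_phiStar_le_general x q hφ
end

section
/- Let T be a positive integer and let ξₐ, ξ ∈ (0,1]. Define ϖ(t) = (1−ξₐ)^{t−1}·ξₐ for integers 1 ≤ t ≤ T, and ϖ(t) = (1−ξₐ)^T·(1−ξ)^{t−T−1}·ξ for integers t > T, and let N = Σ_{t≥1} t·ϖ(t) (which converges). Then |N − 1/ξₐ| ≤ (1−ξₐ)^T · (2T + 1/ξ + 1/ξₐ). -/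
/-!
The first-success time of the two-phase algorithm agrees with that of the pure `ξₐ`-algorithm
up to trial `T`. Past `T`, each of them is `T` plus a geometric waiting time, so the tails
contribute `(1-ξₐ)^T (T + 1/ξ)` and `(1-ξₐ)^T (T + 1/ξₐ)` respectively. Hence
`N - 1/ξₐ = (1-ξₐ)^T (1/ξ - 1/ξₐ)` exactly, and the bound follows.
-/

open Finset

theorem HasSum.of_eq_of_lt_of_tails {G : Type*} [AddCommGroup G] [TopologicalSpace G]
    [IsTopologicalAddGroup G] [T2Space G] {f g : ℕ → G} {k : ℕ} {a b c : G}
    (hfg : ∀ i < k, f i = g i) (hg : HasSum g a) (hg_tail : HasSum (fun n => g (n + k)) b)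
    (hf_tail : HasSum (fun n => f (n + k)) c) : HasSum f (a - b + c) := by
  have hhead : ∑ i ∈ range k, f i = ∑ i ∈ range k, g i :=
    sum_congr rfl fun i hi => hfg i (mem_range.mp hi)
  have hb : b = a - ∑ i ∈ range k, g i := hg_tail.unique ((hasSum_nat_add_iff' k).2 hg)
  rw [← hasSum_nat_add_iff' k]
  convert hf_tail using 1
  rw [hhead, hb]
  abel

theorem hasSum_natCast_add_succ_mul_geometric {q : ℝ} (hq₀ : 0 < q) (hq₂ : q < 2) (k : ℕ) :
    HasSum (fun n : ℕ => ((↑(n + k) : ℝ) + 1) * ((1 - q) ^ n * q)) (k + 1 / q) := by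
  have hr : ‖1 - q‖ < 1 := by rw [Real.norm_eq_abs, abs_lt]; constructor <;> linarith
  have hmean := (hasSum_coe_mul_geometric_of_norm_lt_one hr).mul_left q
  have hmass := (hasSum_geometric_of_norm_lt_one hr).mul_left ((k + 1) * q)
  have h : HasSum (fun n : ℕ => ((↑(n + k) : ℝ) + 1) * ((1 - q) ^ n * q)) _ :=
    (hmean.add hmass).congr_fun fun n => by push_cast; ring
  convert h using 1
  rw [sub_sub_cancel]
  field_simp
  ring

theorem twoPhase_expectation_close_general (T : ℕ) (ξa ξ : ℝ)
    (hξa : ξa ∈ Set.Ioc (0 : ℝ) 1) (hξ : ξ ∈ Set.Ioc (0 : ℝ) 1)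
    (ϖ : ℕ → ℝ)
    (hϖ₁ : ∀ t, 1 ≤ t → t ≤ T → ϖ t = (1 - ξa) ^ (t - 1) * ξa)
    (hϖ₂ : ∀ t, T < t → ϖ t = (1 - ξa) ^ T * (1 - ξ) ^ (t - T - 1) * ξ) :
    Summable (fun t : ℕ => ((t : ℝ) + 1) * ϖ (t + 1)) ∧
    |(∑' t : ℕ, ((t : ℝ) + 1) * ϖ (t + 1)) - 1 / ξa|
      ≤ (1 - ξa) ^ T * (2 * (T : ℝ) + 1 / ξ + 1 / ξa) := by
  obtain ⟨hξa₀, hξa₁⟩ := hξa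
  obtain ⟨hξ₀, hξ₁⟩ := hξ
  have hgeom : HasSum (fun t : ℕ => ((t : ℝ) + 1) * ((1 - ξa) ^ t * ξa)) (1 / ξa) := by
    simpa using hasSum_natCast_add_succ_mul_geometric hξa₀ (by linarith) 0
  have hgeom_tail : HasSum (fun n => ((↑(n + T) : ℝ) + 1) * ((1 - ξa) ^ (n + T) * ξa))
      ((1 - ξa) ^ T * (T + 1 / ξa)) :=
    ((hasSum_natCast_add_succ_mul_geometric hξa₀ (by linarith) T).mul_left _).congr_fun
      fun n => by ring
  have htail : HasSum (fun n => ((↑(n + T) : ℝ) + 1) * ϖ (n + T + 1))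
      ((1 - ξa) ^ T * (T + 1 / ξ)) :=
    ((hasSum_natCast_add_succ_mul_geometric hξ₀ (by linarith) T).mul_left _).congr_fun
      fun n => by rw [hϖ₂ _ (by omega), show n + T + 1 - T - 1 = n by omega]; ring
  have hN := HasSum.of_eq_of_lt_of_tails (f := fun t : ℕ => ((t : ℝ) + 1) * ϖ (t + 1)) (k := T)
    (fun i hi => by rw [hϖ₁ (i + 1) (by omega) (by omega), Nat.add_sub_cancel])
    hgeom hgeom_tail htail
  refine ⟨hN.summable, ?_⟩
  have hgap : 1 / ξa - (1 - ξa) ^ T * (T + 1 / ξa) + (1 - ξa) ^ T * (T + 1 / ξ) - 1 / ξa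
      = (1 - ξa) ^ T * (1 / ξ - 1 / ξa) := by ring
  rw [hN.tsum_eq, hgap, abs_mul, abs_of_nonneg (pow_nonneg (by linarith) T)]
  gcongr
  calc |1 / ξ - 1 / ξa| ≤ |1 / ξ| + |1 / ξa| := abs_sub _ _
    _ ≤ 2 * (T : ℝ) + 1 / ξ + 1 / ξa := by
      rw [abs_of_pos (by positivity), abs_of_pos (by positivity)]
      linarith [(Nat.cast_nonneg T : (0 : ℝ) ≤ T)]

/-- Let `T ≥ 1` and `ξₐ, ξ ∈ (0,1]`. Define
`ϖ(t) = (1−ξₐ)^{t−1}·ξₐ` for `1 ≤ t ≤ T` and `ϖ(t) = (1−ξₐ)^T·(1−ξ)^{t−T−1}·ξ` for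
`t > T`, and let `N = ∑_{t≥1} t·ϖ(t)` (which converges). Then
`|N − 1/ξₐ| ≤ (1−ξₐ)^T · (2T + 1/ξ + 1/ξₐ)`. The sum over `t ≥ 1` is written as a
sum over `t : ℕ` of `(t+1)·ϖ(t+1)`. -/
theorem twoPhase_expectation_close (T : ℕ) (hT : 0 < T) (ξa ξ : ℝ)
    (hξa : ξa ∈ Set.Ioc (0 : ℝ) 1) (hξ : ξ ∈ Set.Ioc (0 : ℝ) 1)
    (ϖ : ℕ → ℝ)
    (hϖ₁ : ∀ t, 1 ≤ t → t ≤ T → ϖ t = (1 - ξa) ^ (t - 1) * ξa)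
    (hϖ₂ : ∀ t, T < t → ϖ t = (1 - ξa) ^ T * (1 - ξ) ^ (t - T - 1) * ξ) :
    Summable (fun t : ℕ => ((t : ℝ) + 1) * ϖ (t + 1)) ∧
    |(∑' t : ℕ, ((t : ℝ) + 1) * ϖ (t + 1)) - 1 / ξa|
      ≤ (1 - ξa) ^ T * (2 * (T : ℝ) + 1 / ξ + 1 / ξa) :=
  twoPhase_expectation_close_general T ξa ξ hξa hξ ϖ hϖ₁ hϖ₂
end
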